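/- (Swap Lemma) Let O be an ordering of a weighted brick complex, A = O⁻¹(i), B = O⁻¹(i+1), F = ∂A ⊓ ∂B, and O' = τ_i ∘ O. If σ(A;S_i) + σ(B;S_i) + 2ω(F) ≤ 0, then Ω(O') ≤ Ω(O) lexicographically. Moreover, if i is a maximum of O and the inequality is strict, then Ω(O') < Ω(O). -/

import Mathlib

open Finset

/-- The total weight of a set of facets. -/
def wt {Facet : Type} [DecidableEq Facet] (ω : Facet → ℝ) (S : Finset Facet) : ℝ :=
  ∑ f ∈ S, ω f

/-- The strength σ(A;S) of a brick with set of interior facets `intA`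
relative to a surface `S`:  ω(∂'_S A) − ω(∂_S A). -/
def strength {Facet : Type} [DecidableEq Facet] (ω : Facet → ℝ) (intA S : Finset Facet) : ℝ :=
  wt ω (intA \ S) - wt ω (intA ∩ S)

/-- A surface (set of facets) is proper if none of its facets lies in ∂M and every
(n−2)-face not in ∂M is contained in an even number of its facets. -/
def ProperSurf {Facet Face : Type} [DecidableEq Facet] [DecidableEq Face]
    (bdF : Finset Facet) (facesOf : Facet → Finset Face) (bdE : Finset Face)
    (S : Finset Facet) : Prop :=
  (∀ f ∈ S, f ∉ bdF) ∧
  ∀ e : Face, e ∉ bdE → Even ((S.filter (fun f => e ∈ facesOf f)).card)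

/-- The interior facets ∂_I A of a brick `A`: facets incident to exactly two bricks,
one of which is `A`. -/
def intFacets {Brick Facet : Type} [DecidableEq Brick] [Fintype Facet] [DecidableEq Facet]
    (bricksOf : Facet → Finset Brick) (A : Brick) : Finset Facet :=
  univ.filter (fun f => A ∈ bricksOf f ∧ (bricksOf f).card = 2)

/-- The facets shared by two bricks `A` and `B` (∂A ⊓ ∂B). -/
def commonFacets {Brick Facet : Type} [DecidableEq Brick] [Fintype Facet] [DecidableEq Facet]
    (bricksOf : Facet → Finset Brick) (A B : Brick) : Finset Facet :=
  univ.filter (fun f => A ∈ bricksOf f ∧ B ∈ bricksOf f)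

/-- `A` is a shortening move for `S` (given interior facets `intA` of `A`):
it meets `S` and σ(A;S) ≤ 0. -/
def ShortMove {Facet : Type} [DecidableEq Facet] (ω : Facet → ℝ) (intA S : Finset Facet) : Prop :=
  (intA ∩ S).Nonempty ∧ strength ω intA S ≤ 0

/-- `A` is a strict shortening move for `S`: it meets `S` and σ(A;S) < 0. -/
def StrictShort {Facet : Type} [DecidableEq Facet] (ω : Facet → ℝ) (intA S : Finset Facet) : Prop :=
  (intA ∩ S).Nonempty ∧ strength ω intA S < 0

/-- The sublevel set M_j of an ordering: the bricks at heights 1,…,j. -/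
def sublevel {Brick : Type} [Fintype Brick] [DecidableEq Brick] {N : ℕ}
    (O : Fin N ≃ Brick) (j : ℕ) : Finset Brick :=
  univ.filter (fun T => ((O.symm T : Fin N) : ℕ) + 1 ≤ j)

/-- The level surface S_j at height j: facets shared between a brick of M_j and a
brick not in M_j. -/
def levelSurf {Brick Facet : Type} [Fintype Brick] [DecidableEq Brick]
    [Fintype Facet] [DecidableEq Facet]
    (bricksOf : Facet → Finset Brick) {N : ℕ} (O : Fin N ≃ Brick) (j : ℕ) : Finset Facet :=
  univ.filter (fun f => (∃ T ∈ bricksOf f, T ∈ sublevel O j) ∧ ∃ T ∈ bricksOf f, T ∉ sublevel O j)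

/-- Λ(j): the weight of the level surface at height j. -/
def Lam {Brick Facet : Type} [Fintype Brick] [DecidableEq Brick]
    [Fintype Facet] [DecidableEq Facet] (ω : Facet → ℝ)
    (bricksOf : Facet → Finset Brick) {N : ℕ} (O : Fin N ≃ Brick) (j : ℕ) : ℝ :=
  wt ω (levelSurf bricksOf O j)

/-- `t` is a (local) maximum of the ordering with level-weight function Λ. -/
def IsMaxAt (N : ℕ) (Λ : ℕ → ℝ) (t : ℕ) : Prop :=
  ∃ tm tp : ℕ, tm < t ∧ t < tp ∧ tp ≤ N ∧
    Λ tm < Λ (tm + 1) ∧ Λ tp < Λ (tp - 1) ∧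
    ∀ k, tm < k → k < tp → Λ k = Λ t

open Classical in
/-- The width Ω of an ordering: the values of Λ at its maxima, arranged in
non-increasing order. -/
noncomputable def widthList (N : ℕ) (Λ : ℕ → ℝ) : List ℝ :=
  ((((Finset.range (N + 1)).filter (fun t => IsMaxAt N Λ t)).val.map Λ).sort (· ≤ ·)).reverse

/-- Strict lexicographic comparison of widths. -/
def WidthLT (l₁ l₂ : List ℝ) : Prop := List.Lex (· < ·) l₁ l₂

/-- Lexicographic comparison of widths. -/
def WidthLE (l₁ l₂ : List ℝ) : Prop := WidthLT l₁ l₂ ∨ l₁ = l₂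

/-!
Adding a brick `C ∉ X` to a set of bricks `X` toggles exactly the interior facets of `C` in the
cut of `X` (every facet lies in at most two bricks), so `cut (X ∪ {C}) = cut X ∆ ∂_I C` and
`ω(cut (X ∪ {C})) = ω(cut X) + σ(C; cut X)`. With `M` the bricks below `A` and `B`, the swap
changes `Λ` only at the height `j` between `A` and `B`, from `ω(cut (M ∪ {A}))` to
`ω(cut (M ∪ {B}))`; the toggle formula computes the difference as
`σ(A; S_j) + σ(B; S_j) + 2ω(F)`, and also gives `Λ(j - 1) + Λ(j + 1) = Λ(j) + Λ'(j) - 2ω(F)`.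

Under the hypothesis `Λ` is thus lowered at the single height `j`. If `j` is a maximum, the
maxima of value at least `Λ(j)` are the same before and after except for the copy at `j`, and
the width drops lexicographically. If `j` is not a maximum, `Λ(j - 1) + Λ(j + 1) ≤ Λ(j) + Λ'(j)`
forbids a new maximum through `j`, and the maxima and their values do not change.
-/

section Weight
variable {Facet : Type} [DecidableEq Facet] (ω : Facet → ℝ)

lemma strength_eq_sum (I S : Finset Facet) :
    strength ω I S = ∑ f ∈ I, if f ∈ S then -ω f else ω f := by
  rw [Finset.sum_ite, Finset.sum_neg_distrib, Finset.filter_mem_eq_inter,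
    Finset.filter_notMem_eq_sdiff]
  simp only [strength, wt]
  ring

lemma wt_eq_sum_ite {S U : Finset Facet} (h : S ⊆ U) :
    wt ω S = ∑ f ∈ U, if f ∈ S then ω f else 0 := by
  rw [Finset.sum_ite_mem, Finset.inter_eq_right.mpr h, wt]

lemma wt_symmDiff (S I : Finset Facet) :
    wt ω (symmDiff S I) = wt ω S + strength ω I S := by
  have hI : strength ω I S =
      ∑ f ∈ S ∪ I, if f ∈ I then (if f ∈ S then -ω f else ω f) else 0 := by
    rw [Finset.sum_ite_mem, Finset.union_inter_cancel_right, strength_eq_sum]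
  rw [wt_eq_sum_ite ω Finset.symmDiff_subset_union, wt_eq_sum_ite ω Finset.subset_union_left, hI,
    ← Finset.sum_add_distrib]
  refine Finset.sum_congr rfl fun f _ => ?_
  by_cases hS : f ∈ S <;> by_cases hI : f ∈ I <;> simp [Finset.mem_symmDiff, hS, hI]

lemma strength_symmDiff_right (I S J : Finset Facet) :
    strength ω I (symmDiff S J) = strength ω I S - 2 * strength ω (I ∩ J) S := by
  rw [strength_eq_sum, strength_eq_sum, strength_eq_sum, ← Finset.sum_ite_mem I J, Finset.mul_sum,
    ← Finset.sum_sub_distrib]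
  refine Finset.sum_congr rfl fun f _ => ?_
  by_cases hS : f ∈ S <;> by_cases hJ : f ∈ J <;> simp [Finset.mem_symmDiff, hS, hJ] <;> ring

lemma strength_of_disjoint {I S : Finset Facet} (h : Disjoint I S) : strength ω I S = wt ω I := by
  rw [strength, Finset.sdiff_eq_self_of_disjoint h, Finset.disjoint_iff_inter_eq_empty.mp h]
  simp [wt]

lemma wt_nonneg (hω : ∀ f, 0 ≤ ω f) (S : Finset Facet) : 0 ≤ wt ω S :=
  Finset.sum_nonneg fun f _ => hω f

end Weight

section Cut
variable {Brick Facet : Type} [DecidableEq Brick] [Fintype Facet] [DecidableEq Facet]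

def cut (bricksOf : Facet → Finset Brick) (X : Finset Brick) : Finset Facet :=
  univ.filter (fun f => (∃ T ∈ bricksOf f, T ∈ X) ∧ ∃ T ∈ bricksOf f, T ∉ X)

lemma crosses_insert_iff {S X : Finset Brick} {C : Brick} (hS : S.card ≤ 2) (hC : C ∉ X) :
    ((∃ T ∈ S, T ∈ insert C X) ∧ ∃ T ∈ S, T ∉ insert C X) ↔
      ((∃ T ∈ S, T ∈ X) ∧ ∃ T ∈ S, T ∉ X) ∧ ¬(C ∈ S ∧ S.card = 2) ∨
        (C ∈ S ∧ S.card = 2) ∧ ¬((∃ T ∈ S, T ∈ X) ∧ ∃ T ∈ S, T ∉ X) := by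
  by_cases hCS : C ∈ S
  · have hrest : (S.erase C).card ≤ 1 := by rw [Finset.card_erase_of_mem hCS]; omega
    have : Nonempty Brick := ⟨C⟩
    obtain ⟨u, hu⟩ := Finset.card_le_one_iff_subset_singleton.mp hrest
    rw [← Finset.insert_erase hCS]
    rcases Finset.subset_singleton_iff.mp hu with h | h
    · simp [h, hC]
    · have huC : u ≠ C := Finset.ne_of_mem_erase (h ▸ Finset.mem_singleton_self u)
      by_cases huX : u ∈ X <;> simp [h, hC, huC, huX, Finset.card_pair huC.symm]
  · have hne : ∀ T ∈ S, T ≠ C := fun T hT h => hCS (h ▸ hT)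
    simp only [hCS, false_and, not_false_eq_true, and_true, false_and, or_false, Finset.mem_insert]
    constructor
    · rintro ⟨⟨T, hT, rfl | hTX⟩, U, hU, hUX⟩
      · exact absurd rfl (hne T hT)
      · exact ⟨⟨T, hT, hTX⟩, U, hU, fun h => hUX (Or.inr h)⟩
    · rintro ⟨⟨T, hT, hTX⟩, U, hU, hUX⟩
      exact ⟨⟨T, hT, Or.inr hTX⟩, U, hU, fun h => h.elim (hne U hU) hUX⟩

lemma cut_insert {bricksOf : Facet → Finset Brick} (hcard : ∀ f, (bricksOf f).card ≤ 2)
    {X : Finset Brick} {C : Brick} (hC : C ∉ X) :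
    cut bricksOf (insert C X) = symmDiff (cut bricksOf X) (intFacets bricksOf C) := by
  ext f
  simp only [cut, intFacets, Finset.mem_symmDiff, Finset.mem_filter, Finset.mem_univ, true_and,
    crosses_insert_iff (hcard f) hC]

lemma intFacets_inter_intFacets {bricksOf : Facet → Finset Brick}
    (hcard : ∀ f, (bricksOf f).card ≤ 2) {A B : Brick} (hAB : A ≠ B) :
    intFacets bricksOf A ∩ intFacets bricksOf B = commonFacets bricksOf A B := by
  ext f
  simp only [intFacets, commonFacets, Finset.mem_inter, Finset.mem_filter, Finset.mem_univ,
    true_and]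
  constructor
  · rintro ⟨⟨hA, -⟩, hB, -⟩
    exact ⟨hA, hB⟩
  · rintro ⟨hA, hB⟩
    have : 1 < (bricksOf f).card := Finset.one_lt_card.mpr ⟨A, hA, B, hB, hAB⟩
    have := hcard f
    exact ⟨⟨hA, by omega⟩, hB, by omega⟩

lemma disjoint_commonFacets_cut {bricksOf : Facet → Finset Brick}
    (hcard : ∀ f, (bricksOf f).card ≤ 2) {X : Finset Brick} {A B : Brick} (hAB : A ≠ B)
    (hA : A ∉ X) (hB : B ∉ X) : Disjoint (commonFacets bricksOf A B) (cut bricksOf X) := by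
  refine Finset.disjoint_left.mpr fun f hf hcut => ?_
  simp only [commonFacets, cut, Finset.mem_filter, Finset.mem_univ, true_and] at hf hcut
  obtain ⟨⟨T, hT, hTX⟩, -⟩ := hcut
  have hpair : {A, B} = bricksOf f :=
    Finset.eq_of_subset_of_card_le
      (Finset.insert_subset hf.1 (Finset.singleton_subset_iff.mpr hf.2))
      (by rw [Finset.card_pair hAB]; exact hcard f)
  rw [← hpair, Finset.mem_insert, Finset.mem_singleton] at hT
  rcases hT with rfl | rfl <;> contradiction

end Cut

section Exchange
variable {Brick Facet : Type} [DecidableEq Brick] [Fintype Facet] [DecidableEq Facet]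
  {ω : Facet → ℝ} {bricksOf : Facet → Finset Brick} {M : Finset Brick} {A B : Brick}

lemma wt_cut_insert (hcard : ∀ f, (bricksOf f).card ≤ 2) (hA : A ∉ M) :
    wt ω (cut bricksOf (insert A M)) =
      wt ω (cut bricksOf M) + strength ω (intFacets bricksOf A) (cut bricksOf M) := by
  rw [cut_insert hcard hA, wt_symmDiff]

lemma strength_self_cut_insert (hcard : ∀ f, (bricksOf f).card ≤ 2) (hA : A ∉ M) :
    strength ω (intFacets bricksOf A) (cut bricksOf (insert A M)) =
      -strength ω (intFacets bricksOf A) (cut bricksOf M) := by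
  rw [cut_insert hcard hA, strength_symmDiff_right, Finset.inter_self]
  ring

lemma strength_cut_insert_of_ne (hcard : ∀ f, (bricksOf f).card ≤ 2) (hAB : A ≠ B)
    (hA : A ∉ M) (hB : B ∉ M) :
    strength ω (intFacets bricksOf B) (cut bricksOf (insert A M)) =
      strength ω (intFacets bricksOf B) (cut bricksOf M) -
        2 * wt ω (commonFacets bricksOf A B) := by
  rw [cut_insert hcard hA, strength_symmDiff_right, Finset.inter_comm,
    intFacets_inter_intFacets hcard hAB,
    strength_of_disjoint ω (disjoint_commonFacets_cut hcard hAB hA hB)]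

theorem wt_cut_insert_swap (hcard : ∀ f, (bricksOf f).card ≤ 2) (hAB : A ≠ B)
    (hA : A ∉ M) (hB : B ∉ M) :
    wt ω (cut bricksOf (insert B M)) = wt ω (cut bricksOf (insert A M)) +
      (strength ω (intFacets bricksOf A) (cut bricksOf (insert A M)) +
        strength ω (intFacets bricksOf B) (cut bricksOf (insert A M)) +
        2 * wt ω (commonFacets bricksOf A B)) := by
  rw [wt_cut_insert hcard hA, wt_cut_insert hcard hB, strength_self_cut_insert hcard hA,
    strength_cut_insert_of_ne hcard hAB hA hB]
  ring

theorem wt_cut_add_wt_cut_le (hω : ∀ f, 0 ≤ ω f) (hcard : ∀ f, (bricksOf f).card ≤ 2)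
    (hAB : A ≠ B) (hA : A ∉ M) (hB : B ∉ M) :
    wt ω (cut bricksOf M) + wt ω (cut bricksOf (insert B (insert A M))) ≤
      wt ω (cut bricksOf (insert A M)) + wt ω (cut bricksOf (insert B M)) := by
  have hB' : B ∉ insert A M := by simp [hB, hAB.symm]
  rw [wt_cut_insert hcard hB', wt_cut_insert hcard hB, strength_cut_insert_of_ne hcard hAB hA hB]
  linarith [wt_nonneg ω hω (commonFacets bricksOf A B)]

end Exchange

lemma sort_reverse_eq_append (s : Multiset ℝ) (b : ℝ) :
    (s.sort (· ≤ ·)).reverse =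
      ((s.filter (b ≤ ·)).sort (· ≤ ·)).reverse ++
        ((s.filter (· < b)).sort (· ≤ ·)).reverse := by
  refine List.Perm.eq_of_pairwise (le := (· ≥ ·))
    (fun _ _ _ _ h₁ h₂ => le_antisymm h₂ h₁)
    (List.pairwise_reverse.mpr (Multiset.pairwise_sort s _)) ?_ ?_
  · refine List.pairwise_append.mpr ⟨List.pairwise_reverse.mpr (Multiset.pairwise_sort _ _),
      List.pairwise_reverse.mpr (Multiset.pairwise_sort _ _), fun x hx y hy => ?_⟩
    simp only [List.mem_reverse, Multiset.mem_sort, Multiset.mem_filter] at hx hy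
    linarith [hx.2, hy.2]
  · rw [← Multiset.coe_eq_coe, ← Multiset.coe_add]
    simp only [Multiset.coe_reverse, Multiset.sort_eq]
    simpa only [not_le] using (Multiset.filter_add_not (b ≤ ·) s).symm

lemma sort_reverse_cons_of_le {t : Multiset ℝ} {b : ℝ} (h : ∀ x ∈ t, b ≤ x) :
    ((b ::ₘ t).sort (· ≤ ·)).reverse = (t.sort (· ≤ ·)).reverse ++ [b] := by
  rw [Multiset.sort_cons b t _ h, List.reverse_cons]

lemma lex_sort_reverse_of_filter_eq_cons {s s' : Multiset ℝ} {b : ℝ}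
    (h : s.filter (b ≤ ·) = b ::ₘ s'.filter (b ≤ ·)) :
    List.Lex (· < ·) (s'.sort (· ≤ ·)).reverse (s.sort (· ≤ ·)).reverse := by
  rw [sort_reverse_eq_append s b, sort_reverse_eq_append s' b, h,
    sort_reverse_cons_of_le (fun x hx => (Multiset.mem_filter.mp hx).2), List.append_assoc]
  refine List.Lex.append_left _ ?_ _
  rcases hD : ((s'.filter (· < b)).sort (· ≤ ·)).reverse with _ | ⟨x, _⟩
  · exact List.Lex.nil
  · have hx : x ∈ ((s'.filter (· < b)).sort (· ≤ ·)).reverse := by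
      rw [hD]; exact List.mem_cons_self
    simp only [List.mem_reverse, Multiset.mem_sort, Multiset.mem_filter] at hx
    exact List.Lex.rel hx.2

section Maxima
variable {N j t : ℕ} {Λ Λ' : ℕ → ℝ}

lemma isMaxAt_iff : IsMaxAt N Λ t ↔ ∃ tm tp : ℕ, tm < t ∧ t < tp ∧ tp ≤ N ∧
    Λ tm < Λ t ∧ Λ tp < Λ t ∧ ∀ k, tm < k → k < tp → Λ k = Λ t := by
  refine exists₂_congr fun tm tp => ?_
  constructor
  · rintro ⟨h1, h2, h3, h4, h5, h6⟩
    rw [h6 (tm + 1) (by omega) (by omega)] at h4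
    rw [h6 (tp - 1) (by omega) (by omega)] at h5
    exact ⟨h1, h2, h3, h4, h5, h6⟩
  · rintro ⟨h1, h2, h3, h4, h5, h6⟩
    rw [← h6 (tm + 1) (by omega) (by omega)] at h4
    rw [← h6 (tp - 1) (by omega) (by omega)] at h5
    exact ⟨h1, h2, h3, h4, h5, h6⟩

lemma le_of_window {tm tp : ℕ} {v : ℝ} (hl : Λ tm < v) (hr : Λ tp < v)
    (hc : ∀ k, tm < k → k < tp → Λ k = v) {k : ℕ} (h1 : tm ≤ k) (h2 : k ≤ tp) :
    Λ k ≤ v := by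
  rcases h1.eq_or_lt with rfl | h1
  · exact hl.le
  rcases h2.eq_or_lt with rfl | h2
  · exact hr.le
  exact (hc k h1 h2).le

lemma isMaxAt_of_neighbors_lt (hj : 1 ≤ j) (hjN : j + 1 ≤ N) (hl : Λ (j - 1) < Λ j)
    (hr : Λ (j + 1) < Λ j) : IsMaxAt N Λ j :=
  isMaxAt_iff.mpr ⟨j - 1, j + 1, by omega, by omega, hjN, hl, hr, fun k h1 h2 => by
    rw [show k = j by omega]⟩

lemma IsMaxAt.of_plateau (h : IsMaxAt N Λ j) (hc : ∀ k ∈ Set.uIcc j t, Λ k = Λ j) :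
    IsMaxAt N Λ t := by
  obtain ⟨sm, sp, hsm, hsp, hN, hl, hr, hin⟩ := isMaxAt_iff.mp h
  have hct : Λ t = Λ j := hc t Set.right_mem_uIcc
  have hsm' : sm < t := by
    by_contra! h
    exact hl.ne (hc sm (Set.mem_uIcc.mpr (Or.inr ⟨h, hsm.le⟩)))
  have hsp' : t < sp := by
    by_contra! h
    exact hr.ne (hc sp (Set.mem_uIcc.mpr (Or.inl ⟨hsp.le, h⟩)))
  exact isMaxAt_iff.mpr ⟨sm, sp, hsm', hsp', hN, hct ▸ hl, hct ▸ hr, fun k h1 h2 => by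
    rw [hin k h1 h2, hct]⟩

lemma le_of_lower (hoff : ∀ k, k ≠ j → Λ' k = Λ k) (hlt : Λ' j < Λ j) (k : ℕ) :
    Λ' k ≤ Λ k := by
  rcases eq_or_ne k j with rfl | hk
  · exact hlt.le
  · exact (hoff k hk).le

lemma IsMaxAt.of_lower (hoff : ∀ k, k ≠ j → Λ' k = Λ k) (hlt : Λ' j < Λ j) (ht : t ≠ j)
    (h : IsMaxAt N Λ t) : IsMaxAt N Λ' t := by
  obtain ⟨tm, tp, htm, htp, hN, hl, hr, hc⟩ := isMaxAt_iff.mp h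
  have hle := le_of_lower hoff hlt
  rw [isMaxAt_iff, hoff t ht]
  by_cases hj : tm < j ∧ j < tp
  · rcases lt_or_gt_of_ne ht with hjt | hjt
    · exact ⟨tm, j, htm, hjt, by omega, (hle tm).trans_lt hl, hc j hj.1 hj.2 ▸ hlt,
        fun k h1 h2 => by rw [hoff k (by omega)]; exact hc k h1 (by omega)⟩
    · exact ⟨j, tp, hjt, htp, hN, hc j hj.1 hj.2 ▸ hlt, (hle tp).trans_lt hr,
        fun k h1 h2 => by rw [hoff k (by omega)]; exact hc k (by omega) h2⟩
  · exact ⟨tm, tp, htm, htp, hN, (hle tm).trans_lt hl, (hle tp).trans_lt hr,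
      fun k h1 h2 => by rw [hoff k (by omega)]; exact hc k h1 h2⟩

lemma eq_or_eq_of_lower_of_not_lt (hoff : ∀ k, k ≠ j → Λ' k = Λ k) {a b : ℕ} {v : ℝ}
    (ha : Λ' a < v) (hb : Λ' b < v) (h : ¬(Λ a < v ∧ Λ b < v)) :
    (j = a ∨ j = b) ∧ v ≤ Λ j := by
  have hend : ∀ e, Λ' e < v → v ≤ Λ e → j = e := fun e he hve => by
    by_contra hej
    rw [hoff e (Ne.symm hej)] at he
    linarith
  rw [not_and_or, not_lt, not_lt] at h
  rcases h with h | h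
  · exact ⟨Or.inl (hend a ha h), hend a ha h ▸ h⟩
  · exact ⟨Or.inr (hend b hb h), hend b hb h ▸ h⟩

lemma IsMaxAt.of_lower_of_isMaxAt (hoff : ∀ k, k ≠ j → Λ' k = Λ k) (hlt : Λ' j < Λ j)
    (hmax : IsMaxAt N Λ j) (ht : t ≠ j) (h : IsMaxAt N Λ' t) (hjt : Λ j ≤ Λ' t) :
    IsMaxAt N Λ t := by
  obtain ⟨tm, tp, htm, htp, hN, hl, hr, hc⟩ := isMaxAt_iff.mp h
  rw [hoff t ht] at hl hr hc hjt
  have hin : ∀ k, tm < k → k < tp → Λ k = Λ t := fun k h1 h2 => by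
    have hkj : k ≠ j := by rintro rfl; linarith [hc k h1 h2]
    rw [← hoff k hkj, hc k h1 h2]
  by_cases hends : Λ tm < Λ t ∧ Λ tp < Λ t
  · exact isMaxAt_iff.mpr ⟨tm, tp, htm, htp, hN, hends.1, hends.2, hin⟩
  -- otherwise `j` is an end of the window at the level of `t`, so `t` lies on the plateau of `j`
  have hj := eq_or_eq_of_lower_of_not_lt hoff hl hr hends
  refine hmax.of_plateau fun k hk => ?_
  rw [Set.mem_uIcc] at hk
  rcases eq_or_ne k j with rfl | hkj
  · rfl
  · rw [hin k (by omega) (by omega)]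
    exact le_antisymm hjt hj.2 |>.symm

lemma IsMaxAt.of_lower_of_not_isMaxAt (hoff : ∀ k, k ≠ j → Λ' k = Λ k) (hlt : Λ' j < Λ j)
    (hsub : Λ (j - 1) + Λ (j + 1) ≤ Λ j + Λ' j) (hj : 1 ≤ j) (hjN : j + 1 ≤ N)
    (hnmax : ¬IsMaxAt N Λ j) (h : IsMaxAt N Λ' t) : IsMaxAt N Λ t := by
  obtain ⟨tm, tp, htm, htp, hN, hl, hr, hc⟩ := isMaxAt_iff.mp h
  have hnb : ¬(Λ (j - 1) < Λ j ∧ Λ (j + 1) < Λ j) := fun h =>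
    hnmax (isMaxAt_of_neighbors_lt hj hjN h.1 h.2)
  have hjin : ¬(tm < j ∧ j < tp) := fun ⟨h1, h2⟩ => hnb
    ⟨by linarith [hoff (j - 1) (by omega), hc j h1 h2,
        le_of_window hl hr hc (k := j - 1) (by omega) (by omega)],
      by linarith [hoff (j + 1) (by omega), hc j h1 h2,
        le_of_window hl hr hc (k := j + 1) (by omega) (by omega)]⟩
  have ht : t ≠ j := by rintro rfl; exact hjin ⟨htm, htp⟩
  rw [hoff t ht] at hl hr hc
  have hin : ∀ k, tm < k → k < tp → k ≠ j → Λ k = Λ t := fun k h1 h2 hkj => by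
    rw [← hoff k hkj, hc k h1 h2]
  rw [isMaxAt_iff]
  by_cases hends : Λ tm < Λ t ∧ Λ tp < Λ t
  · exact ⟨tm, tp, htm, htp, hN, hends.1, hends.2, fun k h1 h2 => hin k h1 h2 (by omega)⟩
  -- `j` is an end of the window; `hsub` and `hnmax` force `Λ j = Λ t`, so the window of `t`
  -- extends one step past `j`
  obtain ⟨hjend | hjend, hjt⟩ := eq_or_eq_of_lower_of_not_lt hoff hl hr hends
  · subst hjend
    have hr' : Λ (j + 1) = Λ t := hin (j + 1) (by omega) (by omega) (by omega)
    have hl' : Λ (j - 1) < Λ j := by linarith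
    have hjt' : Λ j = Λ t := le_antisymm (not_lt.mp fun h => hnb ⟨hl', hr' ▸ h⟩) hjt
    refine ⟨j - 1, tp, by omega, htp, hN, hjt' ▸ hl', ?_, fun k h1 h2 => ?_⟩
    · linarith [hoff tp (by omega)]
    · rcases eq_or_ne k j with rfl | hkj
      · exact hjt'
      · exact hin k (by omega) h2 hkj
  · subst hjend
    have hl' : Λ (j - 1) = Λ t := hin (j - 1) (by omega) (by omega) (by omega)
    have hr' : Λ (j + 1) < Λ j := by linarith
    have hjt' : Λ j = Λ t := le_antisymm (not_lt.mp fun h => hnb ⟨hl' ▸ h, hr'⟩) hjt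
    refine ⟨tm, j + 1, htm, by omega, hjN, ?_, hjt' ▸ hr', fun k h1 h2 => ?_⟩
    · linarith [hoff tm (by omega)]
    · rcases eq_or_ne k j with rfl | hkj
      · exact hjt'
      · exact hin k h1 (by omega) hkj

end Maxima

section Width
variable {N j : ℕ} {Λ Λ' : ℕ → ℝ}

lemma widthList_congr (h : ∀ t, IsMaxAt N Λ' t ↔ IsMaxAt N Λ t)
    (hv : ∀ t, IsMaxAt N Λ t → Λ' t = Λ t) : widthList N Λ' = widthList N Λ := by
  classical
  unfold widthList
  rw [Finset.filter_congr fun t _ => h t]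
  congr 2
  exact Multiset.map_congr rfl fun t ht => hv t (Finset.mem_filter.mp (Finset.mem_val.mp ht)).2

open Classical in
lemma filter_map_maxima (N : ℕ) (Λ : ℕ → ℝ) (b : ℝ) :
    (((range (N + 1)).filter (IsMaxAt N Λ)).val.map Λ).filter (b ≤ ·) =
      ((range (N + 1)).filter (fun t => b ≤ Λ t ∧ IsMaxAt N Λ t)).val.map Λ := by
  rw [Multiset.filter_map, Finset.filter_val, Finset.filter_val, Multiset.filter_filter]
  rfl

lemma widthLT_of_lower_of_isMaxAt (hoff : ∀ k, k ≠ j → Λ' k = Λ k) (hlt : Λ' j < Λ j)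
    (hmax : IsMaxAt N Λ j) : WidthLT (widthList N Λ') (widthList N Λ) := by
  classical
  have hjN : j < N + 1 := by obtain ⟨_, tp, -, h, h', -⟩ := hmax; omega
  have hj : j ∉ (range (N + 1)).filter (fun t => Λ j ≤ Λ' t ∧ IsMaxAt N Λ' t) := by
    simp only [Finset.mem_filter, not_and]
    exact fun _ h => absurd h (not_le.mpr hlt)
  have hmaxima : (range (N + 1)).filter (fun t => Λ j ≤ Λ t ∧ IsMaxAt N Λ t) =
      insert j ((range (N + 1)).filter (fun t => Λ j ≤ Λ' t ∧ IsMaxAt N Λ' t)) := by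
    ext t
    simp only [Finset.mem_filter, Finset.mem_insert, Finset.mem_range]
    constructor
    · rintro ⟨htN, hjt, ht⟩
      rcases eq_or_ne t j with rfl | htj
      · exact Or.inl rfl
      · exact Or.inr ⟨htN, (hoff t htj).symm ▸ hjt, ht.of_lower hoff hlt htj⟩
    · rintro (rfl | ⟨htN, hjt, ht⟩)
      · exact ⟨hjN, le_rfl, hmax⟩
      · have htj : t ≠ j := by rintro rfl; linarith
        exact ⟨htN, hoff t htj ▸ hjt, IsMaxAt.of_lower_of_isMaxAt hoff hlt hmax htj ht hjt⟩
  unfold WidthLT widthList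
  refine lex_sort_reverse_of_filter_eq_cons (b := Λ j) ?_
  rw [filter_map_maxima, filter_map_maxima, hmaxima, Finset.insert_val_of_notMem hj,
    Multiset.map_cons]
  refine congrArg _ (Multiset.map_congr rfl fun t ht => ?_)
  have htj : t ≠ j := by rintro rfl; exact hj ht
  exact (hoff t htj).symm

lemma widthList_eq_of_lower_of_not_isMaxAt (hoff : ∀ k, k ≠ j → Λ' k = Λ k)
    (hlt : Λ' j < Λ j)
    (hsub : Λ (j - 1) + Λ (j + 1) ≤ Λ j + Λ' j) (hj : 1 ≤ j) (hjN : j + 1 ≤ N)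
    (hnmax : ¬IsMaxAt N Λ j) : widthList N Λ' = widthList N Λ := by
  have hne : ∀ {t}, IsMaxAt N Λ t → t ≠ j := by rintro t ht rfl; exact hnmax ht
  refine widthList_congr (fun t => ⟨fun ht => ?_, fun ht => ht.of_lower hoff hlt (hne ht)⟩)
    fun t ht => hoff t (hne ht)
  exact ht.of_lower_of_not_isMaxAt hoff hlt hsub hj hjN hnmax

theorem widthLE_of_lower (hoff : ∀ k, k ≠ j → Λ' k = Λ k) (hle : Λ' j ≤ Λ j)
    (hsub : Λ (j - 1) + Λ (j + 1) ≤ Λ j + Λ' j) (hj : 1 ≤ j) (hjN : j + 1 ≤ N) :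
    WidthLE (widthList N Λ') (widthList N Λ) := by
  rcases hle.eq_or_lt with heq | hlt
  · have : Λ' = Λ := funext fun k => by
      rcases eq_or_ne k j with rfl | hk
      · exact heq
      · exact hoff k hk
    exact Or.inr (congrArg _ this)
  by_cases hmax : IsMaxAt N Λ j
  · exact Or.inl (widthLT_of_lower_of_isMaxAt hoff hlt hmax)
  · exact Or.inr (widthList_eq_of_lower_of_not_isMaxAt hoff hlt hsub hj hjN hmax)

end Width

section Sublevel
variable {Brick Facet : Type} [Fintype Brick] [DecidableEq Brick] [Fintype Facet]
  [DecidableEq Facet] {N : ℕ}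

lemma apply_mem_sublevel_iff (O : Fin N ≃ Brick) (k : Fin N) (j : ℕ) :
    O k ∈ sublevel O j ↔ (k : ℕ) + 1 ≤ j := by
  simp [sublevel]

lemma sublevel_succ (O : Fin N ≃ Brick) (i : Fin N) :
    sublevel O ((i : ℕ) + 1) = insert (O i) (sublevel O i) := by
  ext T
  obtain ⟨k, rfl⟩ := O.surjective T
  simp only [Finset.mem_insert, apply_mem_sublevel_iff, O.injective.eq_iff, Fin.ext_iff]
  omega

lemma sublevel_swap_trans_of_ne (O : Fin N ≃ Brick) {i i' : Fin N} (hi' : (i' : ℕ) = i + 1)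
    {j : ℕ} (hj : j ≠ (i : ℕ) + 1) :
    sublevel ((Equiv.swap i i').trans O) j = sublevel O j := by
  ext T
  obtain ⟨k, rfl⟩ := ((Equiv.swap i i').trans O).surjective T
  rw [apply_mem_sublevel_iff, Equiv.trans_apply, apply_mem_sublevel_iff]
  rcases eq_or_ne k i with rfl | hki
  · simp only [Equiv.swap_apply_left]; omega
  rcases eq_or_ne k i' with rfl | hki'
  · simp only [Equiv.swap_apply_right]; omega
  · rw [Equiv.swap_apply_of_ne_of_ne hki hki']

lemma levelSurf_succ (bricksOf : Facet → Finset Brick) (O : Fin N ≃ Brick) (i : Fin N) :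
    levelSurf bricksOf O ((i : ℕ) + 1) = cut bricksOf (insert (O i) (sublevel O i)) := by
  rw [levelSurf, sublevel_succ]
  rfl

lemma levelSurf_swap_trans_succ (bricksOf : Facet → Finset Brick) (O : Fin N ≃ Brick)
    {i i' : Fin N} (hi' : (i' : ℕ) = i + 1) :
    levelSurf bricksOf ((Equiv.swap i i').trans O) ((i : ℕ) + 1) =
      cut bricksOf (insert (O i') (sublevel O i)) := by
  rw [levelSurf_succ, sublevel_swap_trans_of_ne O hi' (by omega), Equiv.trans_apply,
    Equiv.swap_apply_left]

lemma Lam_swap_trans_of_ne (ω : Facet → ℝ) (bricksOf : Facet → Finset Brick)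
    (O : Fin N ≃ Brick) {i i' : Fin N} (hi' : (i' : ℕ) = i + 1) {j : ℕ}
    (hj : j ≠ (i : ℕ) + 1) :
    Lam ω bricksOf ((Equiv.swap i i').trans O) j = Lam ω bricksOf O j := by
  simp only [Lam, levelSurf, sublevel_swap_trans_of_ne O hi' hj]

end Sublevel

/-- Heights are 1-indexed: brick `O k` is at height `k + 1`. -/
theorem stmt7 {Brick Facet : Type} [Fintype Brick] [DecidableEq Brick]
    [Fintype Facet] [DecidableEq Facet]
    (ω : Facet → ℝ) (hω : ∀ f, 0 ≤ ω f)
    (bricksOf : Facet → Finset Brick)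
    (hBC : ∀ f, (bricksOf f).card = 1 ∨ (bricksOf f).card = 2)
    {N : ℕ} (O : Fin N ≃ Brick) (i : Fin N) (hi : (i : ℕ) + 1 < N)
    (O' : Fin N ≃ Brick) (hO' : O' = (Equiv.swap i ⟨(i : ℕ) + 1, hi⟩).trans O)
    (hineq : strength ω (intFacets bricksOf (O i)) (levelSurf bricksOf O ((i : ℕ) + 1))
        + strength ω (intFacets bricksOf (O ⟨(i : ℕ) + 1, hi⟩)) (levelSurf bricksOf O ((i : ℕ) + 1))
        + 2 * wt ω (commonFacets bricksOf (O i) (O ⟨(i : ℕ) + 1, hi⟩)) ≤ 0) :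
    WidthLE (widthList N (Lam ω bricksOf O')) (widthList N (Lam ω bricksOf O)) ∧
    (IsMaxAt N (Lam ω bricksOf O) ((i : ℕ) + 1) →
      strength ω (intFacets bricksOf (O i)) (levelSurf bricksOf O ((i : ℕ) + 1))
        + strength ω (intFacets bricksOf (O ⟨(i : ℕ) + 1, hi⟩)) (levelSurf bricksOf O ((i : ℕ) + 1))
        + 2 * wt ω (commonFacets bricksOf (O i) (O ⟨(i : ℕ) + 1, hi⟩)) < 0 →
      WidthLT (widthList N (Lam ω bricksOf O')) (widthList N (Lam ω bricksOf O))) := by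
  subst hO'
  set i' : Fin N := ⟨(i : ℕ) + 1, hi⟩
  have hcard : ∀ f, (bricksOf f).card ≤ 2 := fun f => by rcases hBC f with h | h <;> omega
  have hA : O i ∉ sublevel O i := by simp [apply_mem_sublevel_iff]
  have hB : O i' ∉ sublevel O i := by simp [i', apply_mem_sublevel_iff]
  have hAB : O i ≠ O i' := fun h => by simpa [i', Fin.ext_iff] using O.injective h
  set M := sublevel O i
  have hoff : ∀ k, k ≠ (i : ℕ) + 1 → Lam ω bricksOf ((Equiv.swap i i').trans O) k =
      Lam ω bricksOf O k := fun k => Lam_swap_trans_of_ne ω bricksOf O rfl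
  have hΛ : Lam ω bricksOf O (i + 1) = wt ω (cut bricksOf (insert (O i) M)) :=
    congrArg (wt ω) (levelSurf_succ bricksOf O i)
  have hΛ' : Lam ω bricksOf ((Equiv.swap i i').trans O) (i + 1) =
      wt ω (cut bricksOf (insert (O i') M)) :=
    congrArg (wt ω) (levelSurf_swap_trans_succ bricksOf O rfl)
  have hΛ₂ : Lam ω bricksOf O (i + 1 + 1) =
      wt ω (cut bricksOf (insert (O i') (insert (O i) M))) :=
    congrArg (wt ω) ((levelSurf_succ bricksOf O i').trans
      (congrArg (cut bricksOf ∘ insert (O i')) (sublevel_succ O i)))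
  have hswap := wt_cut_insert_swap (ω := ω) hcard hAB hA hB
  rw [levelSurf_succ] at hineq ⊢
  refine ⟨widthLE_of_lower hoff ?_ ?_ (by omega) hi,
    fun hmax hlt => widthLT_of_lower_of_isMaxAt hoff ?_ hmax⟩
  · linarith
  · rw [hΛ, hΛ', hΛ₂, Nat.add_sub_cancel]
    exact wt_cut_add_wt_cut_le hω hcard hAB hA hB
  · linarith
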